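/- Let {f̂(n)}_{n≥0} ∈ GBV and {f̂(n) + f̂(−n)}_{n≥1} ∈ GBV. Then there exists C > 0 such that for all n ≥ 1 and all x ∈ [0, π]: |Σ_{k=1}^{n} f̂(−n−k) sin kx| ≤ C·max_{1≤k≤n} k·(|f̂(n+k)| + |f̂(−n−k)|). -/

import Mathlib

open Filter Complex Real

noncomputable section

/-- `K(θ) = {z ∈ ℂ : |arg z| ≤ θ}`. -/
def Kset (θ : ℝ) : Set ℂ := {z : ℂ | |Complex.arg z| ≤ θ}

/-- The class GBV: `c_n ∈ K(θ₁)` for some `θ₁ ∈ [0, π/2)` and all `n ≥ 1`, and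
`Σ_{n=m}^{2m} |Δc_n| ≤ M · max_{m ≤ n < m+N₀} |c_n|` for all `m ≥ 1`. -/
def GBV (c : ℕ → ℂ) : Prop :=
  (∃ θ₁ : ℝ, 0 ≤ θ₁ ∧ θ₁ < Real.pi / 2 ∧ ∀ n, 1 ≤ n → c n ∈ Kset θ₁) ∧
  (∃ N₀ : ℕ, 1 ≤ N₀ ∧ ∃ M : ℝ, 0 < M ∧ ∀ m, 1 ≤ m →
    (∑ n ∈ Finset.Icc m (2 * m), ‖c n - c (n + 1)‖) ≤
      M * ⨆ n ∈ Finset.Ico m (m + N₀), ‖c n‖)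

/-!
Write `b k = f̂(-n-k)`, so that `k |b k| ≤ A`, where `A` is the right-hand maximum, and split the
sum at `s ≈ 1/x`. Below `s` use `|sin kx| ≤ kx`, which gives at most `s · x · A ≤ A`. Above `s`,
sum by parts against the sine partial sums, which are `O(1/x)`. The boundary terms are
`O(A/s) = O(A x)`. The variation of `f̂(-j)` over `j ∈ [n+s, 2n]` lies in the dyadic block
`[n+s, 2(n+s)]`, and there the two GBV conditions (for `f̂(j)` and `f̂(j) + f̂(-j)`) bound it by the
values on a window of length `N₀`, which are also `O(A/s)`. A tail shorter than `N₀` is bounded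
termwise, each term being at most `A`.
-/

open Finset

theorem le_biSup_of_mem_finset {α ι : Type*} [ConditionallyCompleteLattice α] {s : Finset ι}
    (f : ι → α) {i : ι} (hi : i ∈ s) : f i ≤ ⨆ j ∈ s, f j := by
  refine le_ciSup₂ (f := fun j (_ : j ∈ s) => f j) ?_ i hi
  refine (s.finite_toSet.image f).bddAbove.mono ?_
  rintro _ ⟨_, ⟨j, rfl⟩, ⟨hj, rfl⟩⟩
  exact ⟨j, hj, rfl⟩

theorem abs_sum_range_sin_mul_le {x : ℝ} (hx : 0 < x) (hxπ : x ≤ π) (m : ℕ) :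
    |∑ i ∈ range m, Real.sin (i * x)| ≤ π / x := by
  set z := Complex.exp (I * x)
  have hsin : 2 / π * (x / 2) ≤ Real.sin (x / 2) := mul_le_sin (by positivity) (by linarith)
  have hsin_pos : 0 < Real.sin (x / 2) := lt_of_lt_of_le (by positivity) hsin
  have hz : ‖z - 1‖ = 2 * Real.sin (x / 2) := by
    rw [norm_exp_I_mul_ofReal_sub_one, Real.norm_eq_abs, abs_of_pos (by positivity)]
  have hz1 : z ≠ 1 := fun h => by simp [h] at hz; linarith
  have him : ∑ i ∈ range m, Real.sin (i * x) = (∑ i ∈ range m, z ^ i).im := by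
    rw [Complex.im_sum]
    refine sum_congr rfl fun i _ => ?_
    rw [← Complex.exp_nat_mul, ← Complex.exp_ofReal_mul_I_im]
    push_cast
    ring_nf
  have hnum : ‖z ^ m - 1‖ ≤ 2 := by
    calc ‖z ^ m - 1‖ ≤ ‖z‖ ^ m + ‖(1 : ℂ)‖ := by rw [← norm_pow]; exact norm_sub_le _ _
      _ = 2 := by rw [norm_exp_I_mul_ofReal]; norm_num
  calc |∑ i ∈ range m, Real.sin (i * x)|
      ≤ ‖∑ i ∈ range m, z ^ i‖ := him ▸ Complex.abs_im_le_norm _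
    _ = ‖z ^ m - 1‖ / (2 * Real.sin (x / 2)) := by rw [geom_sum_eq hz1, norm_div, hz]
    _ ≤ 2 / (2 * Real.sin (x / 2)) := by gcongr
    _ ≤ π / x := by
      rw [div_le_div_iff₀ (by positivity) hx]
      have := pi_pos
      field_simp at hsin
      nlinarith

theorem norm_sum_Ico_mul_le_of_norm_sum_range_le {R : Type*} [SeminormedRing R] {f g : ℕ → R}
    {B : ℝ} (hg : ∀ t, ‖∑ i ∈ range t, g i‖ ≤ B) {m n : ℕ} (hmn : m < n) :
    ‖∑ i ∈ Ico m n, f i * g i‖ ≤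
      (‖f (n - 1)‖ + ‖f m‖ + ∑ i ∈ Ico m (n - 1), ‖f i - f (i + 1)‖) * B := by
  have hterm : ∀ (c : R) t, ‖c * ∑ i ∈ range t, g i‖ ≤ ‖c‖ * B := fun c t =>
    (norm_mul_le _ _).trans (mul_le_mul_of_nonneg_left (hg t) (norm_nonneg c))
  simp only [← smul_eq_mul (a := f _)]
  rw [sum_Ico_by_parts f g hmn]
  simp only [smul_eq_mul]
  calc _ ≤ ‖f (n - 1) * ∑ i ∈ range n, g i‖ + ‖f m * ∑ i ∈ range m, g i‖
        + ∑ i ∈ Ico m (n - 1), ‖(f (i + 1) - f i) * ∑ j ∈ range (i + 1), g j‖ :=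
        (norm_sub_le _ _).trans (add_le_add (norm_sub_le _ _) (norm_sum_le _ _))
    _ ≤ ‖f (n - 1)‖ * B + ‖f m‖ * B + ∑ i ∈ Ico m (n - 1), ‖f i - f (i + 1)‖ * B := by
        gcongr with i
        · exact hterm _ _
        · exact hterm _ _
        · rw [norm_sub_rev]; exact hterm _ _
    _ = _ := by rw [← sum_mul]; ring

section SineSums

variable {b : ℕ → ℂ} {A x : ℝ}

theorem norm_sum_mul_sin_le_card_mul (hx : 0 ≤ x) {t : Finset ℕ} (hb : ∀ k ∈ t, k * ‖b k‖ ≤ A) :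
    ‖∑ k ∈ t, b k * Real.sin (k * x)‖ ≤ #t * (x * A) := by
  refine (norm_sum_le _ _).trans <|
    (sum_le_card_nsmul _ _ _ fun k hk => ?_).trans_eq (nsmul_eq_mul _ _)
  have hsin : |Real.sin (k * x)| ≤ k * x :=
    Real.abs_sin_le_abs.trans_eq (abs_of_nonneg (by positivity))
  rw [norm_mul, Complex.norm_real, Real.norm_eq_abs]
  calc ‖b k‖ * |Real.sin (k * x)| ≤ ‖b k‖ * (k * x) := by gcongr
    _ = x * (k * ‖b k‖) := by ring
    _ ≤ x * A := by gcongr; exact hb k hk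

theorem norm_sum_mul_sin_le_card_mul_of_pos {t : Finset ℕ} (ht : ∀ k ∈ t, 0 < k)
    (hb : ∀ k ∈ t, k * ‖b k‖ ≤ A) :
    ‖∑ k ∈ t, b k * Real.sin (k * x)‖ ≤ #t * A := by
  refine (norm_sum_le _ _).trans <|
    (sum_le_card_nsmul _ _ _ fun k hk => ?_).trans_eq (nsmul_eq_mul _ _)
  rw [norm_mul, Complex.norm_real, Real.norm_eq_abs]
  calc ‖b k‖ * |Real.sin (k * x)| ≤ 1 * ‖b k‖ := by
        rw [mul_comm]; gcongr; exact Real.abs_sin_le_one _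
    _ ≤ k * ‖b k‖ := by gcongr; exact_mod_cast ht k hk
    _ ≤ A := hb k hk

theorem norm_sum_Ico_mul_sin_le (hx : 0 < x) (hxπ : x ≤ π) {s n : ℕ} (hsn : s ≤ n) :
    ‖∑ k ∈ Ico s (n + 1), b k * Real.sin (k * x)‖ ≤
      (‖b n‖ + ‖b s‖ + ∑ k ∈ Ico s n, ‖b k - b (k + 1)‖) * (π / x) := by
  refine norm_sum_Ico_mul_le_of_norm_sum_range_le (fun t => ?_) (by omega)
  rw [← Complex.ofReal_sum, Complex.norm_real, Real.norm_eq_abs]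
  exact abs_sum_range_sin_mul_le hx hxπ t

theorem norm_sum_mul_sin_le {n N₀ : ℕ} {M : ℝ} (hA : 0 ≤ A) (hM : 0 ≤ M)
    (hx : x ∈ Set.Icc 0 π) (hb : ∀ k ∈ Icc 1 n, k * ‖b k‖ ≤ A)
    (hvar : ∀ s, 1 ≤ s → s ≤ n → s + N₀ ≤ n + 1 → s * ∑ k ∈ Ico s n, ‖b k - b (k + 1)‖ ≤ M * A) :
    ‖∑ k ∈ Icc 1 n, b k * Real.sin (k * x)‖ ≤ (1 + N₀ + π * (M + 2)) * A := by
  obtain ⟨hx0, hxπ⟩ := hx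
  have hπM : 0 ≤ π * (M + 2) := by positivity
  rcases hx0.eq_or_lt with rfl | hx0
  · simpa using by positivity
  set s := min (⌊x⁻¹⌋₊ + 1) (n + 1)
  have hhead : ‖∑ k ∈ Ico 1 s, b k * Real.sin (k * x)‖ ≤ A := by
    refine (norm_sum_mul_sin_le_card_mul hx0.le fun k hk => hb k ?_).trans ?_
    · simp only [mem_Ico, mem_Icc] at hk ⊢; omega
    have hcard : (#(Ico 1 s) : ℝ) * x ≤ 1 := by
      have : #(Ico 1 s) ≤ ⌊x⁻¹⌋₊ := by simp; omega
      calc (#(Ico 1 s) : ℝ) * x ≤ ⌊x⁻¹⌋₊ * x := by gcongr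
        _ ≤ x⁻¹ * x := by gcongr; exact Nat.floor_le (by positivity)
        _ = 1 := inv_mul_cancel₀ hx0.ne'
    nlinarith
  have htail : ‖∑ k ∈ Ico s (n + 1), b k * Real.sin (k * x)‖ ≤ (N₀ + π * (M + 2)) * A := by
    by_cases h : s ≤ n ∧ s + N₀ ≤ n + 1
    · obtain ⟨hsn, hsN₀⟩ := h
      have hs : s = ⌊x⁻¹⌋₊ + 1 := by omega
      have hxs : x⁻¹ ≤ s := by rw [hs]; push_cast; exact (Nat.lt_floor_add_one _).le
      have hs1 : 1 ≤ s := by omega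
      have hbn : (s : ℝ) * ‖b n‖ ≤ A := le_trans (by gcongr) (hb n (by simp; omega))
      have hbs : (s : ℝ) * ‖b s‖ ≤ A := hb s (by simp; omega)
      set V := ‖b n‖ + ‖b s‖ + ∑ k ∈ Ico s n, ‖b k - b (k + 1)‖
      have hV : s * V ≤ (M + 2) * A := by
        have := hvar s hs1 hsn hsN₀
        simp only [V]; linarith
      calc _ ≤ V * (π / x) := norm_sum_Ico_mul_sin_le hx0 hxπ hsn
        _ ≤ V * (π * s) := by
          rw [div_eq_mul_inv]; gcongr
        _ = π * (s * V) := by ring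
        _ ≤ π * ((M + 2) * A) := by gcongr
        _ ≤ (N₀ + π * (M + 2)) * A := by nlinarith
    · have hcard : #(Ico s (n + 1)) ≤ N₀ := by simp; omega
      calc _ ≤ #(Ico s (n + 1)) * A :=
            norm_sum_mul_sin_le_card_mul_of_pos (fun k hk => by simp at hk; omega)
              fun k hk => hb k (by simp at hk ⊢; omega)
        _ ≤ N₀ * A := by gcongr
        _ ≤ (N₀ + π * (M + 2)) * A := by nlinarith
  rw [← Ico_add_one_right_eq_Icc, ← sum_Ico_consecutive _ (by omega : 1 ≤ s) (by omega : s ≤ n + 1)]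
  calc _ ≤ A + (N₀ + π * (M + 2)) * A := (norm_add_le _ _).trans (add_le_add hhead htail)
    _ = (1 + N₀ + π * (M + 2)) * A := by ring

end SineSums

theorem GBV.exists_sum_norm_sub_le {c : ℕ → ℂ} (hc : GBV c) :
    ∃ N₀ : ℕ, ∃ M : ℝ, 0 ≤ M ∧ ∀ m, 1 ≤ m → ∀ B : ℝ, (∀ j ∈ Ico m (m + N₀), ‖c j‖ ≤ B) →
      ∑ j ∈ Icc m (2 * m), ‖c j - c (j + 1)‖ ≤ M * B := by
  obtain ⟨N₀, hN₀, M, hM, hvar⟩ := hc.2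
  refine ⟨N₀, M, hM.le, fun m hm B hwin => (hvar m hm).trans ?_⟩
  have hB : 0 ≤ B := (norm_nonneg _).trans (hwin m (by simp; omega))
  exact mul_le_mul_of_nonneg_left (Real.iSup_le (fun j => Real.iSup_le (hwin j) hB) hB) hM.le

theorem exists_sum_norm_sub_le_of_GBV_add {c d : ℕ → ℂ} (hc : GBV c)
    (hcd : GBV fun n => c n + d n) :
    ∃ N₀ : ℕ, ∃ M : ℝ, 0 ≤ M ∧ ∀ m, 1 ≤ m → ∀ B : ℝ,
      (∀ j ∈ Ico m (m + N₀), ‖c j‖ ≤ B ∧ ‖d j‖ ≤ B) →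
      ∑ j ∈ Icc m (2 * m), ‖d j - d (j + 1)‖ ≤ M * B := by
  obtain ⟨N₁, M₁, hM₁, hvar₁⟩ := hc.exists_sum_norm_sub_le
  obtain ⟨N₂, M₂, hM₂, hvar₂⟩ := hcd.exists_sum_norm_sub_le
  refine ⟨max N₁ N₂, M₁ + 2 * M₂, by positivity, fun m hm B hwin => ?_⟩
  have hsubwin : ∀ N ≤ max N₁ N₂, ∀ j ∈ Ico m (m + N), ‖c j‖ ≤ B ∧ ‖d j‖ ≤ B :=
    fun N hN j hj => hwin j (Ico_subset_Ico_right (by omega) hj)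
  have hc' := hvar₁ m hm B fun j hj => (hsubwin N₁ (le_max_left _ _) j hj).1
  have hcd' := hvar₂ m hm (2 * B) fun j hj => by
    obtain ⟨hcj, hdj⟩ := hsubwin N₂ (le_max_right _ _) j hj
    linarith [norm_add_le (c j) (d j)]
  calc ∑ j ∈ Icc m (2 * m), ‖d j - d (j + 1)‖
      ≤ ∑ j ∈ Icc m (2 * m), (‖c j - c (j + 1)‖ + ‖c j + d j - (c (j + 1) + d (j + 1))‖) := by
        gcongr with j
        calc ‖d j - d (j + 1)‖ = ‖-(c j - c (j + 1)) + (c j + d j - (c (j + 1) + d (j + 1)))‖ := by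
              ring_nf
          _ ≤ _ := by rw [← norm_neg (c j - c (j + 1))]; exact norm_add_le _ _
    _ ≤ M₁ * B + M₂ * (2 * B) := by rw [sum_add_distrib]; exact add_le_add hc' hcd'
    _ = (M₁ + 2 * M₂) * B := by ring

theorem mul_sum_norm_sub_shift_le {c d : ℕ → ℂ} {N₀ n : ℕ} {M A : ℝ}
    (hvar : ∀ m, 1 ≤ m → ∀ B : ℝ, (∀ j ∈ Ico m (m + N₀), ‖c j‖ ≤ B ∧ ‖d j‖ ≤ B) →
      ∑ j ∈ Icc m (2 * m), ‖d j - d (j + 1)‖ ≤ M * B)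
    (hA : ∀ k ∈ Icc 1 n, k * (‖c (n + k)‖ + ‖d (n + k)‖) ≤ A) (s : ℕ) (hs : 1 ≤ s)
    (hsn : s ≤ n) (hsN₀ : s + N₀ ≤ n + 1) :
    s * ∑ k ∈ Ico s n, ‖d (n + k) - d (n + k + 1)‖ ≤ M * A := by
  have hs0 : (0 : ℝ) < s := by exact_mod_cast hs
  have hA0 : 0 ≤ A := le_trans (by positivity) (hA s (by simp; omega))
  have hwin : ∀ j ∈ Ico (n + s) (n + s + N₀), ‖c j‖ ≤ A / s ∧ ‖d j‖ ≤ A / s := by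
    intro j hj
    obtain ⟨k, rfl⟩ : ∃ k, j = n + k := ⟨j - n, by simp at hj; omega⟩
    have hk : k ∈ Icc 1 n := by simp at hj ⊢; omega
    have hsk : (s : ℝ) ≤ k := by simp at hj; exact_mod_cast hj.1
    have := hA k hk
    rw [le_div_iff₀ hs0, le_div_iff₀ hs0]
    constructor <;> nlinarith [norm_nonneg (c (n + k)), norm_nonneg (d (n + k))]
  calc s * ∑ k ∈ Ico s n, ‖d (n + k) - d (n + k + 1)‖
      ≤ s * ∑ j ∈ Icc (n + s) (2 * (n + s)), ‖d j - d (j + 1)‖ := by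
        rw [sum_Ico_add (fun j => ‖d j - d (j + 1)‖)]
        gcongr
        · intro j hj; simp at hj ⊢; omega
    _ ≤ s * (M * (A / s)) := by gcongr; exact hvar (n + s) (by omega) (A / s) hwin
    _ = M * A := by field_simp

/-- Lemma 6 (second estimate): under the GBV hypotheses, uniformly for `x ∈ [0, π]`,
`|Σ_{k=1}^{n} f̂(−n−k) sin kx| = O(max_{1≤k≤n} k(|f̂(n+k)| + |f̂(−n−k)|))`. -/
theorem stmt_9 (fhat : ℤ → ℂ)
    (h1 : GBV (fun n : ℕ => fhat (n : ℤ)))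
    (h2 : GBV (fun n : ℕ => fhat (n : ℤ) + fhat (-(n : ℤ)))) :
    ∃ C : ℝ, 0 < C ∧ ∀ n : ℕ, 1 ≤ n → ∀ x ∈ Set.Icc (0 : ℝ) Real.pi,
      ‖∑ k ∈ Finset.Icc 1 n,
          fhat (-(n : ℤ) - (k : ℤ)) * (Real.sin (k * x) : ℂ)‖ ≤
        C * ⨆ k ∈ Finset.Icc 1 n,
          (k : ℝ) * (‖fhat ((n : ℤ) + (k : ℤ))‖ +
            ‖fhat (-(n : ℤ) - (k : ℤ))‖) := by
  obtain ⟨N₀, M, hM, hvar⟩ := exists_sum_norm_sub_le_of_GBV_add h1 h2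
  refine ⟨1 + N₀ + π * (M + 2), by positivity, fun n hn x hx => ?_⟩
  set A := ⨆ k ∈ Icc 1 n, (k : ℝ) * (‖fhat (n + k)‖ + ‖fhat (-n - k)‖)
  have hA : ∀ k ∈ Icc 1 n, (k : ℝ) * (‖fhat (n + k)‖ + ‖fhat (-n - k)‖) ≤ A := fun k hk =>
    le_biSup_of_mem_finset (fun k : ℕ => (k : ℝ) * (‖fhat (n + k)‖ + ‖fhat (-n - k)‖)) hk
  have hA0 : 0 ≤ A := le_trans (by positivity) (hA 1 (by simp [hn]))
  refine norm_sum_mul_sin_le hA0 hM hx (fun k hk => ?_) fun s hs hsn hsN₀ => ?_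
  · exact le_trans (by gcongr; exact le_add_of_nonneg_left (norm_nonneg _)) (hA k hk)
  · have := mul_sum_norm_sub_shift_le hvar
      (fun k hk => by simpa only [Nat.cast_add, neg_add'] using hA k hk) s hs hsn hsN₀
    convert this using 6 <;> push_cast <;> ring
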